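/- Define real numbers a_{k,s} for nonnegative integers k, s by the Taylor expansion (1+√(1+x))^s = Σ_{k≥0} a_{k,s} x^k around x = 0. Then for every nonnegative integer N, the (N+1)×(N+1) matrix (a_{k,s})_{0≤k,s≤N} has nonzero determinant. -/
import Mathlib


/-!
STATEMENT 6: Define `a_{k,s} ∈ ℝ` by the Taylor expansion
`(1+√(1+x))^s = Σ_{k≥0} a_{k,s} x^k` near `x = 0` (valid on some neighborhood of `0`).
Then for every `N ≥ 0`, the `(N+1)×(N+1)` matrix `(a_{k,s})_{0≤k,s≤N}` has nonzero
determinant.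
-/

open Finset

lemma stmt6_summ {c : ℕ → ℝ} {F : ℝ → ℝ} {ε : ℝ} (hε : 0 < ε)
    (hc : ∀ x : ℝ, |x| < ε → HasSum (fun k => c k * x ^ k) (F x))
    {y : ℝ} (hy : |y| < ε / 2) : Summable (fun k => ‖c k * y ^ k‖) := by
  set x0 : ℝ := 3 * ε / 4 with hx0
  have hx0pos : 0 < x0 := by positivity
  have hx0lt : |x0| < ε := by rw [abs_of_pos hx0pos]; simp only [hx0]; linarith
  have hsum := (hc x0 hx0lt).summable
  have hb : BddAbove (Set.range fun k => ‖c k * x0 ^ k‖) := by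
    have := hsum.tendsto_atTop_zero.norm
    simpa using this.bddAbove_range
  obtain ⟨M, hM⟩ := hb
  have hMk : ∀ k, ‖c k * x0 ^ k‖ ≤ M := fun k => hM (Set.mem_range_self k)
  set q : ℝ := |y| / x0 with hqdef
  have hq0 : 0 ≤ q := by positivity
  have hq1 : q < 1 := by
    rw [hqdef, div_lt_one hx0pos]
    simp only [hx0]; linarith
  refine Summable.of_nonneg_of_le (fun k => norm_nonneg _) (fun k => ?_)
    ((summable_geometric_of_lt_one hq0 hq1).mul_left M)
  have hkey : ‖c k * y ^ k‖ = ‖c k * x0 ^ k‖ * q ^ k := by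
    rw [norm_mul, norm_mul, norm_pow, norm_pow, mul_assoc, ← mul_pow]
    congr 2
    rw [Real.norm_eq_abs, Real.norm_eq_abs, abs_of_pos hx0pos, hqdef]
    field_simp
  rw [hkey]
  exact mul_le_mul_of_nonneg_right (hMk k) (pow_nonneg hq0 k)

lemma stmt6_cauchy {c d : ℕ → ℝ} {F G : ℝ → ℝ} {ε : ℝ} (hε : 0 < ε)
    (hc : ∀ x : ℝ, |x| < ε → HasSum (fun k => c k * x ^ k) (F x))
    (hd : ∀ x : ℝ, |x| < ε → HasSum (fun k => d k * x ^ k) (G x)) :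
    ∀ x : ℝ, |x| < ε / 2 → HasSum
      (fun k => (∑ j ∈ Finset.range (k + 1), c j * d (k - j)) * x ^ k) (F x * G x) := by
  intro x hx
  have hxε : |x| < ε := lt_of_lt_of_le hx (by linarith)
  have hcs := stmt6_summ hε hc hx
  have hds := stmt6_summ hε hd hx
  have hsum : Summable (fun n => ∑ j ∈ Finset.range (n+1),
      (c j * x ^ j) * (d (n-j) * x ^ (n-j))) :=
    (summable_norm_sum_mul_range_of_summable_norm hcs hds).of_norm
  have heq : ∀ n, (∑ j ∈ Finset.range (n+1), (c j * x ^ j) * (d (n-j) * x ^ (n-j)))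
      = (∑ j ∈ Finset.range (n + 1), c j * d (n - j)) * x ^ n := by
    intro n
    rw [Finset.sum_mul]
    refine Finset.sum_congr rfl fun j hj => ?_
    have hj' : j ≤ n := Nat.lt_succ_iff.mp (Finset.mem_range.mp hj)
    have : x ^ j * x ^ (n - j) = x ^ n := by
      rw [← pow_add]
      congr 1
      omega
    calc c j * x ^ j * (d (n-j) * x ^ (n-j)) = c j * d (n-j) * (x ^ j * x ^ (n-j)) := by ring
      _ = c j * d (n - j) * x ^ n := by rw [this]
  have h1 := tsum_mul_tsum_eq_tsum_sum_range_of_summable_norm hcs hds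
  rw [(hc x hxε).tsum_eq, (hd x hxε).tsum_eq] at h1
  have h2 := hsum.hasSum
  rw [← h1] at h2
  convert h2 using 1
  exact funext fun n => (heq n).symm

lemma stmt6_unique {c d : ℕ → ℝ} {F : ℝ → ℝ} {ε δ : ℝ} (hε : 0 < ε) (hδ : 0 < δ)
    (hc : ∀ x : ℝ, |x| < ε → HasSum (fun k => c k * x ^ k) (F x))
    (hd : ∀ x : ℝ, |x| < δ → HasSum (fun k => d k * x ^ k) (F x)) : c = d := by
  have key : ∀ (e : ℕ → ℝ) (η : ℝ), 0 < η →
      (∀ x : ℝ, |x| < η → HasSum (fun k => e k * x ^ k) (F x)) →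
      HasFPowerSeriesAt F (FormalMultilinearSeries.ofScalars ℝ e) 0 := by
    intro e η hη he
    rw [hasFPowerSeriesAt_iff]
    have hco : ∀ n, (FormalMultilinearSeries.ofScalars ℝ e).coeff n = e n := by
      intro n
      simp only [FormalMultilinearSeries.coeff, FormalMultilinearSeries.ofScalars,
        ContinuousMultilinearMap.smul_apply, ContinuousMultilinearMap.mkPiAlgebraFin_apply,
        smul_eq_mul]
      rw [show (1 : Fin n → ℝ) = fun _ => (1:ℝ) from rfl, List.ofFn_const, List.prod_replicate,
        one_pow, mul_one]
    filter_upwards [Metric.ball_mem_nhds (0:ℝ) hη] with z hz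
    simp only [hco, zero_add, smul_eq_mul]
    have hz' : |z| < η := by simpa [Real.dist_eq] using hz
    have := he z hz'
    simpa [mul_comm] using this
  have h1 := key c ε hε hc
  have h2 := key d δ hδ hd
  exact FormalMultilinearSeries.ofScalars_series_injective (𝕜 := ℝ) ℝ
    (h1.eq_formalMultilinearSeries h2)

theorem stmt6 (a : ℕ → ℕ → ℝ)
    (ha : ∀ s : ℕ, ∃ ε > (0 : ℝ), ∀ x : ℝ, |x| < ε →
      HasSum (fun k : ℕ => a k s * x ^ k) ((1 + Real.sqrt (1 + x)) ^ s))
    (N : ℕ) :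
    (Matrix.of fun k s : Fin (N + 1) => a k.1 s.1).det ≠ 0 := by
  classical
  choose e hepos he using ha
  set η : ℕ → ℝ := fun s => min 1 ((Finset.range (s+1)).inf' (by simp) e) with hηdef
  have hηpos : ∀ s, 0 < η s := by
    intro s
    apply lt_min one_pos
    rw [Finset.lt_inf'_iff]
    intro j _; exact hepos j
  have hη1 : ∀ s, η s ≤ 1 := fun s => min_le_left _ _
  have hηle : ∀ s j, j ≤ s → η s ≤ e j := fun s j hj =>
    le_trans (min_le_right _ _)
      (Finset.inf'_le e (Finset.mem_range.mpr (Nat.lt_succ_of_le hj)))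
  set b : ℕ → ℕ → ℝ :=
    fun k s => ∑ j ∈ Finset.range (s+1), ((s.choose j : ℝ) * (-2)^(s-j)) * a k j with hbdef
  -- b sums to (sqrt(1+x) - 1)^s
  have hb : ∀ s, ∀ x : ℝ, |x| < η s →
      HasSum (fun k => b k s * x ^ k) ((Real.sqrt (1+x) - 1)^s) := by
    intro s x hx
    have hterm : ∀ j ∈ Finset.range (s+1),
        HasSum (fun k => ((s.choose j : ℝ) * (-2)^(s-j)) * (a k j * x ^ k))
          (((s.choose j : ℝ) * (-2)^(s-j)) * (1 + Real.sqrt (1+x))^j) := by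
      intro j hj
      exact (he j x (lt_of_lt_of_le hx
        (hηle s j (Nat.lt_succ_iff.mp (Finset.mem_range.mp hj))))).mul_left _
    have hsum := hasSum_sum hterm
    have hL : (fun k => ∑ j ∈ Finset.range (s+1),
        ((s.choose j : ℝ) * (-2)^(s-j)) * (a k j * x ^ k)) = fun k => b k s * x ^ k := by
      funext k
      rw [hbdef]
      rw [Finset.sum_mul]
      exact Finset.sum_congr rfl fun j _ => by ring
    have hR : ∑ j ∈ Finset.range (s+1),
        ((s.choose j : ℝ) * (-2)^(s-j)) * (1 + Real.sqrt (1+x))^j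
        = (Real.sqrt (1+x) - 1)^s := by
      have hap := add_pow (1 + Real.sqrt (1+x)) (-2 : ℝ) s
      rw [show Real.sqrt (1+x) - 1 = (1 + Real.sqrt (1+x)) + (-2) by ring, hap]
      exact Finset.sum_congr rfl fun j _ => by ring
    rw [hL] at hsum
    rw [← hR]
    exact hsum
  have hb0 : ∀ s, b 0 s = (0:ℝ)^s := by
    intro s
    have h1 := hb s 0 (by simpa using hηpos s)
    have h2 : HasSum (fun k => b k s * (0:ℝ) ^ k) (b 0 s) := by
      have hfn : (fun k => b k s * (0:ℝ)^k) = fun k => if k = 0 then b 0 s else 0 := by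
        funext k
        cases k with
        | zero => simp
        | succ n => simp
      rw [hfn]
      exact hasSum_ite_eq 0 (b 0 s)
    have h3 := h2.unique h1
    rw [show ((1:ℝ)+0) = 1 by ring, Real.sqrt_one] at h3
    simpa using h3
  -- convolution identity
  have hconv : ∀ s k, b k (s+1) = ∑ j ∈ Finset.range (k+1), b j 1 * b (k-j) s := by
    intro s
    have hη'pos : (0:ℝ) < min (η 1) (η s) := lt_min (hηpos 1) (hηpos s)
    have h1 : ∀ x : ℝ, |x| < min (η 1) (η s) →
        HasSum (fun k => b k 1 * x ^ k) ((Real.sqrt (1+x) - 1)^1) :=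
      fun x hx => hb 1 x (lt_of_lt_of_le hx (min_le_left _ _))
    have h2 : ∀ x : ℝ, |x| < min (η 1) (η s) →
        HasSum (fun k => b k s * x ^ k) ((Real.sqrt (1+x) - 1)^s) :=
      fun x hx => hb s x (lt_of_lt_of_le hx (min_le_right _ _))
    have h3 := stmt6_cauchy hη'pos h1 h2
    have h4 : ∀ x : ℝ, |x| < min (η 1) (η s) / 2 →
        HasSum (fun k => (∑ j ∈ Finset.range (k+1), b j 1 * b (k-j) s) * x ^ k)
          ((Real.sqrt (1+x) - 1)^(s+1)) := by
      intro x hx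
      have h5 := h3 x hx
      rwa [show (Real.sqrt (1+x) - 1)^1 * (Real.sqrt (1+x) - 1)^s
        = (Real.sqrt (1+x) - 1)^(s+1) by ring] at h5
    have h6 := stmt6_unique (F := fun x => (Real.sqrt (1+x) - 1)^(s+1))
      (hηpos (s+1)) (by positivity : (0:ℝ) < min (η 1) (η s)/2) (hb (s+1)) h4
    intro k
    exact congrFun h6 k
  have hb01 : b 0 1 = 0 := by simpa using hb0 1
  -- b 1 1 = 1/2
  have hb11 : b 1 1 = 1/2 := by
    have hq := stmt6_cauchy (hηpos 1) (hb 1) (hb 1)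
    have hc2 : ∀ x : ℝ, |x| < η 1 / 2 →
        HasSum (fun k => (∑ j ∈ Finset.range (k+1), b j 1 * b (k-j) 1) * x ^ k)
          (x - 2 * (Real.sqrt (1+x) - 1)) := by
      intro x hx
      have h5 := hq x hx
      have hx1 : |x| < 1 := lt_of_lt_of_le (lt_of_lt_of_le hx (by linarith [hηpos 1])) (hη1 1)
      have hx1' : (0:ℝ) ≤ 1 + x := by
        have := abs_lt.mp hx1
        linarith [this.1]
      have hsq : Real.sqrt (1+x) * Real.sqrt (1+x) = 1 + x := Real.mul_self_sqrt hx1'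
      have hval : (Real.sqrt (1+x) - 1)^1 * (Real.sqrt (1+x) - 1)^1
          = x - 2 * (Real.sqrt (1+x) - 1) := by linear_combination hsq
      rwa [hval] at h5
    have hd2 : ∀ x : ℝ, |x| < η 1 →
        HasSum (fun k => ((if k = 1 then (1:ℝ) else 0) - 2 * b k 1) * x ^ k)
          (x - 2 * (Real.sqrt (1+x) - 1)) := by
      intro x hx
      have hm : HasSum (fun k => (if k = 1 then (1:ℝ) else 0) * x ^ k) x := by
        have hfn : (fun k => (if k = 1 then (1:ℝ) else 0) * x ^ k)
            = fun k => if k = 1 then x else 0 := by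
          funext k
          by_cases hk : k = 1
          · subst hk; simp
          · simp [hk]
        rw [hfn]
        exact hasSum_ite_eq 1 x
      have hg := (hb 1 x hx).mul_left 2
      have hms := hm.sub hg
      have hfun : (fun k => (if k = 1 then (1:ℝ) else 0) * x ^ k - 2 * (b k 1 * x ^ k))
          = fun k => ((if k = 1 then (1:ℝ) else 0) - 2 * b k 1) * x ^ k := by
        funext k; ring
      rw [hfun] at hms
      rwa [show x - 2 * ((Real.sqrt (1+x) - 1)^1) = x - 2 * (Real.sqrt (1+x) - 1) by ring] at hms
    have heq := stmt6_unique (F := fun x => x - 2 * (Real.sqrt (1+x) - 1))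
      (half_pos (hηpos 1)) (hηpos 1) hc2 hd2
    have h1' := congrFun heq 1
    rw [Finset.sum_range_succ, Finset.sum_range_one] at h1'
    simp only [hb01, zero_mul, mul_zero, zero_add, add_zero, if_pos rfl] at h1'
    norm_num at h1'
    linarith
  -- triangularity
  have htri : ∀ s, (∀ k, k < s → b k s = 0) ∧ b s s = (1/2:ℝ)^s := by
    intro s
    induction s with
    | zero =>
      refine ⟨fun k hk => absurd hk (Nat.not_lt_zero k), ?_⟩
      simpa using hb0 0
    | succ s ih =>
      obtain ⟨ih0, ihd⟩ := ih
      constructor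
      · intro k hk
        rw [hconv s k]
        apply Finset.sum_eq_zero
        intro j hj
        rcases Nat.eq_zero_or_pos j with h0 | h1
        · subst h0; rw [hb01, zero_mul]
        · have hlt : k - j < s := by
            have := Finset.mem_range.mp hj; omega
          rw [ih0 _ hlt, mul_zero]
      · rw [hconv s (s+1)]
        rw [Finset.sum_eq_single 1]
        · rw [hb11, show s+1-1 = s from rfl, ihd, pow_succ]; ring
        · intro j hj hne
          rcases Nat.eq_zero_or_pos j with h0 | h1
          · subst h0; rw [hb01, zero_mul]
          · have hj2 : 2 ≤ j := by omega
            have hjle : j ≤ s+1 := Nat.lt_succ_iff.mp (Finset.mem_range.mp hj)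
            have hlt : s+1-j < s := by omega
            rw [ih0 _ hlt, mul_zero]
        · intro h; exact absurd (Finset.mem_range.mpr (by omega)) h
  -- matrices
  set M : Matrix (Fin (N+1)) (Fin (N+1)) ℝ := Matrix.of fun k s => a k.1 s.1 with hM
  set T : Matrix (Fin (N+1)) (Fin (N+1)) ℝ := Matrix.of fun j s =>
    if (j:ℕ) ≤ (s:ℕ) then ((s:ℕ).choose (j:ℕ) : ℝ) * (-2:ℝ)^((s:ℕ)-(j:ℕ)) else 0 with hT
  set B : Matrix (Fin (N+1)) (Fin (N+1)) ℝ := Matrix.of fun k s => b k.1 s.1 with hB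
  have hMT : M * T = B := by
    ext k s
    rw [Matrix.mul_apply]
    show (∑ j : Fin (N+1), a k.1 j.1 *
        (if (j:ℕ) ≤ (s:ℕ) then ((s:ℕ).choose (j:ℕ) : ℝ) * (-2:ℝ)^((s:ℕ)-(j:ℕ)) else 0))
        = b k.1 s.1
    rw [Fin.sum_univ_eq_sum_range (fun j => a k.1 j *
      (if j ≤ (s:ℕ) then ((s:ℕ).choose j : ℝ) * (-2:ℝ)^((s:ℕ)-j) else 0)) (N+1)]
    have hsub : Finset.range ((s:ℕ)+1) ⊆ Finset.range (N+1) :=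
      Finset.range_subset_range.mpr (by omega)
    rw [← Finset.sum_subset hsub (fun x hx hnx => by
      have hns : ¬ x ≤ (s:ℕ) := by
        simp only [Finset.mem_range] at hnx
        omega
      simp [hns])]
    rw [hbdef]
    refine Finset.sum_congr rfl fun j hj => ?_
    have hjs : j ≤ (s:ℕ) := Nat.lt_succ_iff.mp (Finset.mem_range.mp hj)
    rw [if_pos hjs]
    ring
  have hTtri : T.BlockTriangular id := by
    intro i j hij
    show (if (i:ℕ) ≤ (j:ℕ) then ((j:ℕ).choose (i:ℕ) : ℝ) * (-2:ℝ)^((j:ℕ)-(i:ℕ)) else 0) = 0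
    rw [if_neg (not_le.mpr (by exact_mod_cast hij))]
  have hTdet : T.det = 1 := by
    rw [Matrix.det_of_upperTriangular hTtri]
    refine Finset.prod_eq_one fun i _ => ?_
    show (if (i:ℕ) ≤ (i:ℕ) then ((i:ℕ).choose (i:ℕ) : ℝ) * (-2:ℝ)^((i:ℕ)-(i:ℕ)) else 0) = 1
    simp
  have hBtri : B.BlockTriangular OrderDual.toDual := by
    intro i j hij
    show b i.1 j.1 = 0
    exact (htri j.1).1 i.1 (by exact_mod_cast hij)
  have hBdet : B.det = ∏ i : Fin (N+1), (1/2:ℝ)^(i:ℕ) := by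
    rw [Matrix.det_of_lowerTriangular B hBtri]
    exact Finset.prod_congr rfl fun i _ => (htri i.1).2
  have hdm : M.det * T.det = B.det := by rw [← Matrix.det_mul, hMT]
  rw [hTdet, mul_one, hBdet] at hdm
  show M.det ≠ 0
  rw [hdm]
  exact ne_of_gt (Finset.prod_pos fun i _ => pow_pos (by norm_num) _)
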